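/- In an enhanced Leibniz algebra, the anomaly γ is totally antisymmetric in its three arguments; equivalently, for all u, v ∈ V one has γ(v,v,u) = 0, γ(v,u,v) = 0, and γ(u,v,v) = 0. -/

import Mathlib

/-!
Axiom (d) turns `t (v ∘ v)` into `[v, v]`, after which `γ(v, v, u)` cancels termwise, while
`γ(u, v, v)` and `γ(v, u, v)` reduce to the symmetrised identity (c) (the latter after polarising
(d)). Since `γ` is linear in each argument, vanishing on the diagonal of a pair of arguments
makes it antisymmetric in that pair, and the two transpositions `(1 2)` and `(2 3)` generate all of `S₃`.
-/

/-- The anomaly `γ` of an enhanced Leibniz algebra. -/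
def elaGamma {K V W : Type*} [Field K] [AddCommGroup V] [Module K V]
    [AddCommGroup W] [Module K W]
    (t : W →ₗ[K] V) (br : V →ₗ[K] V →ₗ[K] V) (c : V →ₗ[K] V →ₗ[K] W)
    (v₁ v₂ v₃ : V) : W :=
  - c v₁ (br v₂ v₃) + c (br v₁ v₂) v₃ + c v₂ (br v₁ v₃)
    - c (t (c v₂ v₃)) v₁ - c (t (c v₁ v₂)) v₃ + c (t (c v₁ v₃)) v₂

section ELA

variable {K V W : Type*} [Field K] [AddCommGroup V] [Module K V] [AddCommGroup W] [Module K W]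
  (t : W →ₗ[K] V) (br : V →ₗ[K] V →ₗ[K] V) (c : V →ₗ[K] V →ₗ[K] W)

theorem c_add_swap_bracket_self (h2 : (2 : K) ≠ 0)
    (axc : ∀ u v : V, (2 : K)⁻¹ • (c u (br v v) + c (br v v) u)
      = (2 : K)⁻¹ • (c v (br u v) + c (br u v) v)) (u v : V) :
    c u (br v v) + c (br v v) u = c v (br u v) + c (br u v) v :=
  smul_right_injective W (inv_ne_zero h2) (axc u v)

theorem t_c_add_swap (axd : ∀ v : V, br v v = t (c v v)) (u v : V) :
    t (c u v) + t (c v u) = br u v + br v u := by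
  have h := axd (u + v)
  simp only [map_add, LinearMap.add_apply, axd u, axd v] at h
  linear_combination (norm := module) -h

theorem elaGamma_self_left (axd : ∀ v : V, br v v = t (c v v)) (u v : V) :
    elaGamma t br c v v u = 0 := by
  simp only [elaGamma, ← axd]
  abel

theorem elaGamma_self_right (h2 : (2 : K) ≠ 0)
    (axc : ∀ u v : V, (2 : K)⁻¹ • (c u (br v v) + c (br v v) u)
      = (2 : K)⁻¹ • (c v (br u v) + c (br u v) v))
    (axd : ∀ v : V, br v v = t (c v v)) (u v : V) :
    elaGamma t br c u v v = 0 := by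
  simp only [elaGamma, ← axd]
  linear_combination (norm := module) -c_add_swap_bracket_self br c h2 axc u v

theorem elaGamma_self_outer (h2 : (2 : K) ≠ 0)
    (axc : ∀ u v : V, (2 : K)⁻¹ • (c u (br v v) + c (br v v) u)
      = (2 : K)⁻¹ • (c v (br u v) + c (br u v) v))
    (axd : ∀ v : V, br v v = t (c v v)) (u v : V) :
    elaGamma t br c v u v = 0 := by
  have hpol : c (t (c u v)) v + c (t (c v u)) v = c (br u v) v + c (br v u) v := by
    simpa only [map_add, LinearMap.add_apply] using congrArg (c · v) (t_c_add_swap t br c axd u v)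
  simp only [elaGamma, ← axd]
  linear_combination (norm := module) c_add_swap_bracket_self br c h2 axc u v - hpol

def elaGammaBilinLeft (w : V) : V →ₗ[K] V →ₗ[K] W :=
  LinearMap.mk₂ K (fun a b ↦ elaGamma t br c a b w)
    (by intros; simp only [elaGamma, map_add, LinearMap.add_apply]; abel)
    (by intros; simp only [elaGamma, map_smul, LinearMap.smul_apply]; module)
    (by intros; simp only [elaGamma, map_add, LinearMap.add_apply]; abel)
    (by intros; simp only [elaGamma, map_smul, LinearMap.smul_apply]; module)

def elaGammaBilinRight (u : V) : V →ₗ[K] V →ₗ[K] W :=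
  LinearMap.mk₂ K (elaGamma t br c u)
    (by intros; simp only [elaGamma, map_add, LinearMap.add_apply]; abel)
    (by intros; simp only [elaGamma, map_smul, LinearMap.smul_apply]; module)
    (by intros; simp only [elaGamma, map_add, LinearMap.add_apply]; abel)
    (by intros; simp only [elaGamma, map_smul, LinearMap.smul_apply]; module)

theorem elaGamma_swap_left (axd : ∀ v : V, br v v = t (c v v)) (a b w : V) :
    elaGamma t br c a b w = -elaGamma t br c b a w :=
  (LinearMap.IsAlt.neg (B := elaGammaBilinLeft t br c w)
    (fun v ↦ elaGamma_self_left t br c axd w v) b a).symm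

theorem elaGamma_swap_right (h2 : (2 : K) ≠ 0)
    (axc : ∀ u v : V, (2 : K)⁻¹ • (c u (br v v) + c (br v v) u)
      = (2 : K)⁻¹ • (c v (br u v) + c (br u v) v))
    (axd : ∀ v : V, br v v = t (c v v)) (u a b : V) :
    elaGamma t br c u a b = -elaGamma t br c u b a :=
  (LinearMap.IsAlt.neg (B := elaGammaBilinRight t br c u)
    (elaGamma_self_right t br c h2 axc axd u) b a).symm

end ELA

theorem ela_gamma_totally_antisymmetric_general
    {K : Type*} [Field K] (h2 : (2 : K) ≠ 0)
    {V W : Type*} [AddCommGroup V] [Module K V] [AddCommGroup W] [Module K W]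
    (t : W →ₗ[K] V) (br : V →ₗ[K] V →ₗ[K] V) (c : V →ₗ[K] V →ₗ[K] W)
    (axc : ∀ u v : V, (2 : K)⁻¹ • (c u (br v v) + c (br v v) u)
            = (2 : K)⁻¹ • (c v (br u v) + c (br u v) v))
    (axd : ∀ v : V, br v v = t (c v v)) :
    (∀ u v : V, elaGamma t br c v v u = 0) ∧
    (∀ u v : V, elaGamma t br c v u v = 0) ∧
    (∀ u v : V, elaGamma t br c u v v = 0) ∧
    (∀ v₁ v₂ v₃ : V, elaGamma t br c v₁ v₂ v₃ = - elaGamma t br c v₂ v₁ v₃) ∧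
    (∀ v₁ v₂ v₃ : V, elaGamma t br c v₁ v₂ v₃ = - elaGamma t br c v₁ v₃ v₂) ∧
    (∀ v₁ v₂ v₃ : V, elaGamma t br c v₁ v₂ v₃ = - elaGamma t br c v₃ v₂ v₁) := by
  have swap_left := elaGamma_swap_left t br c axd
  have swap_right := elaGamma_swap_right t br c h2 axc axd
  refine ⟨elaGamma_self_left t br c axd, elaGamma_self_outer t br c h2 axc axd,
    elaGamma_self_right t br c h2 axc axd, swap_left, swap_right, fun v₁ v₂ v₃ ↦ ?_⟩
  rw [swap_left, swap_right v₂, swap_left v₂, neg_neg]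

/-- In an enhanced Leibniz algebra, the anomaly `γ` is totally antisymmetric in its
three arguments; equivalently it vanishes whenever two arguments coincide. -/
theorem ela_gamma_totally_antisymmetric
    {K : Type*} [Field K] (h2 : (2 : K) ≠ 0)
    {V W : Type*} [AddCommGroup V] [Module K V] [AddCommGroup W] [Module K W]
    (t : W →ₗ[K] V) (br : V →ₗ[K] V →ₗ[K] V) (c : V →ₗ[K] V →ₗ[K] W)
    (leib : ∀ v₁ v₂ v₃ : V, br v₁ (br v₂ v₃) = br (br v₁ v₂) v₃ + br v₂ (br v₁ v₃))
    (axa : ∀ (w : W) (v : V), br (t w) v = 0)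
    (axb : ∀ w : W, c (t w) (t w) = 0)
    (axc : ∀ u v : V, (2 : K)⁻¹ • (c u (br v v) + c (br v v) u)
            = (2 : K)⁻¹ • (c v (br u v) + c (br u v) v))
    (axd : ∀ v : V, br v v = t (c v v)) :
    (∀ u v : V, elaGamma t br c v v u = 0) ∧
    (∀ u v : V, elaGamma t br c v u v = 0) ∧
    (∀ u v : V, elaGamma t br c u v v = 0) ∧
    (∀ v₁ v₂ v₃ : V, elaGamma t br c v₁ v₂ v₃ = - elaGamma t br c v₂ v₁ v₃) ∧
    (∀ v₁ v₂ v₃ : V, elaGamma t br c v₁ v₂ v₃ = - elaGamma t br c v₁ v₃ v₂) ∧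
    (∀ v₁ v₂ v₃ : V, elaGamma t br c v₁ v₂ v₃ = - elaGamma t br c v₃ v₂ v₁) :=
  ela_gamma_totally_antisymmetric_general h2 t br c axc axd
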